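/- Let B be a nonempty finite family of subsets of [n], let λ ∈ ℝ₊ⁿ, and let p = (p₁,...,pₙ) be the marginals of the probability distribution on B proportional to λ^S = Πᵢ∈S λᵢ. Then Σᵢ₌₁ⁿ (pᵢ log(λᵢ/pᵢ) + (1−pᵢ) log(1/(1−pᵢ))) ≥ log(Σ_{B∈B} λ^B). -/

import Mathlib

/-!
Let `q` be the `λ`-weighted distribution on `ℬ` and `p` its marginals. Its entropy is
`H(q) = log Z - ∑ᵢ pᵢ log λᵢ`, and by subadditivity of entropy `H(q) ≤ ∑ᵢ h(pᵢ)`, where `h` is the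
binary entropy. Subadditivity is Gibbs' inequality against the product of Bernoulli distributions
with parameters `pᵢ`, whose cross entropy with `q` is exactly `∑ᵢ h(pᵢ)`; that product has total
mass `1` on all subsets, hence at most `1` on `ℬ`.
-/

open Finset Real

variable {ι α : Type*}

theorem sum_negMulLog_le_neg_sum_mul_log (s : Finset ι) {q r : ι → ℝ}
    (hq : ∀ i ∈ s, 0 ≤ q i) (hr : ∀ i ∈ s, 0 ≤ r i) (hsum : ∑ i ∈ s, r i ≤ ∑ i ∈ s, q i)
    (hsupp : ∀ i ∈ s, q i ≠ 0 → r i ≠ 0) :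
    ∑ i ∈ s, negMulLog (q i) ≤ -∑ i ∈ s, q i * log (r i) := by
  have hterm : ∀ i ∈ s, negMulLog (q i) + q i * log (r i) ≤ r i - q i := by
    intro i hi
    rcases (hq i hi).eq_or_lt with h | hqpos
    · simp [← h, hr i hi]
    have hrpos := (hr i hi).lt_of_ne' (hsupp i hi hqpos.ne')
    calc negMulLog (q i) + q i * log (r i) = q i * log (r i / q i) := by
          rw [negMulLog, log_div hrpos.ne' hqpos.ne']; ring
      _ ≤ q i * (r i / q i - 1) :=
          mul_le_mul_of_nonneg_left (log_le_sub_one_of_pos (div_pos hrpos hqpos)) hqpos.le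
      _ = r i - q i := by field_simp
  have := sum_le_sum hterm
  rw [sum_add_distrib, sum_sub_distrib] at this
  linarith

theorem sum_negMulLog_div_eq (s : Finset ι) {w : ι → ℝ} {Z : ℝ}
    (hZ : ∑ i ∈ s, w i = Z) (hZ0 : Z ≠ 0) :
    ∑ i ∈ s, negMulLog (w i / Z) = log Z - ∑ i ∈ s, w i / Z * log (w i) := by
  have hterm : ∀ i ∈ s, negMulLog (w i / Z) = w i / Z * log Z - w i / Z * log (w i) := by
    intro i _
    rcases eq_or_ne (w i) 0 with h | h
    · simp [h]
    · rw [negMulLog, log_div h hZ0]; ring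
  rw [sum_congr rfl hterm, sum_sub_distrib, ← sum_mul, ← sum_div, hZ, div_self hZ0, one_mul]

section Bernoulli

variable [Fintype α] [DecidableEq α]

noncomputable def bernoulliProd (p : α → ℝ) (S : Finset α) : ℝ :=
  ∏ i, if i ∈ S then p i else 1 - p i

theorem sum_bernoulliProd (p : α → ℝ) : ∑ S, bernoulliProd p S = 1 := by
  have h := Fintype.prod_add p (fun i => 1 - p i)
  simp only [add_sub_cancel, prod_const_one] at h
  rw [h]
  refine sum_congr rfl fun S _ => ?_
  rw [bernoulliProd, prod_ite]
  congr 2 <;> ext <;> simp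

theorem bernoulliProd_nonneg {p : α → ℝ} (h0 : ∀ i, 0 ≤ p i) (h1 : ∀ i, p i ≤ 1)
    (S : Finset α) : 0 ≤ bernoulliProd p S :=
  prod_nonneg fun i _ => by split_ifs <;> linarith [h0 i, h1 i]

theorem log_bernoulliProd {p : α → ℝ} {S : Finset α}
    (h : ∀ i, (if i ∈ S then p i else 1 - p i) ≠ 0) :
    log (bernoulliProd p S) = ∑ i, if i ∈ S then log (p i) else log (1 - p i) := by
  rw [bernoulliProd, log_prod fun i _ => h i]
  exact sum_congr rfl fun i _ => apply_ite log _ _ _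

end Bernoulli

section Marginal

variable [DecidableEq α] (ℬ : Finset (Finset α)) (q : Finset α → ℝ)

def marginal (i : α) : ℝ := ∑ S ∈ ℬ with i ∈ S, q S

variable {ℬ q}

theorem sum_filter_notMem_eq_one_sub_marginal (hq1 : ∑ S ∈ ℬ, q S = 1) (i : α) :
    ∑ S ∈ ℬ with i ∉ S, q S = 1 - marginal ℬ q i := by
  rw [marginal, ← hq1, ← sum_filter_add_sum_filter_not ℬ (i ∈ ·)]
  ring

theorem marginal_nonneg (hq : ∀ S ∈ ℬ, 0 ≤ q S) (i : α) : 0 ≤ marginal ℬ q i :=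
  sum_nonneg fun S hS => hq S (mem_filter.1 hS).1

theorem le_marginal (hq : ∀ S ∈ ℬ, 0 ≤ q S) {S : Finset α} (hS : S ∈ ℬ) {i : α} (hi : i ∈ S) :
    q S ≤ marginal ℬ q i :=
  single_le_sum (fun T hT => hq T (mem_filter.1 hT).1) (mem_filter.2 ⟨hS, hi⟩)

theorem le_one_sub_marginal (hq : ∀ S ∈ ℬ, 0 ≤ q S) (hq1 : ∑ S ∈ ℬ, q S = 1) {S : Finset α}
    (hS : S ∈ ℬ) {i : α} (hi : i ∉ S) : q S ≤ 1 - marginal ℬ q i := by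
  rw [← sum_filter_notMem_eq_one_sub_marginal hq1]
  exact single_le_sum (fun T hT => hq T (mem_filter.1 hT).1) (mem_filter.2 ⟨hS, hi⟩)

theorem marginal_le_one (hq : ∀ S ∈ ℬ, 0 ≤ q S) (hq1 : ∑ S ∈ ℬ, q S = 1) (i : α) :
    marginal ℬ q i ≤ 1 := by
  have := sum_filter_notMem_eq_one_sub_marginal hq1 i
  have := sum_nonneg fun S (hS : S ∈ ℬ.filter (i ∉ ·)) => hq S (mem_filter.1 hS).1
  linarith

theorem ite_marginal_pos (hq : ∀ S ∈ ℬ, 0 ≤ q S) (hq1 : ∑ S ∈ ℬ, q S = 1) {S : Finset α}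
    (hS : S ∈ ℬ) (hqS : 0 < q S) (i : α) :
    0 < if i ∈ S then marginal ℬ q i else 1 - marginal ℬ q i := by
  split_ifs with hi
  · exact hqS.trans_le (le_marginal hq hS hi)
  · exact hqS.trans_le (le_one_sub_marginal hq hq1 hS hi)

variable [Fintype α]

theorem sum_mul_sum_ite_mem (a b : α → ℝ) :
    ∑ S ∈ ℬ, q S * ∑ i, (if i ∈ S then a i else b i) =
      ∑ i, (marginal ℬ q i * a i + (∑ S ∈ ℬ with i ∉ S, q S) * b i) := by
  simp_rw [mul_sum]
  rw [sum_comm]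
  refine sum_congr rfl fun i _ => ?_
  simp_rw [mul_ite]
  rw [sum_ite, marginal, sum_mul, sum_mul]

theorem sum_mul_log_prod_eq_sum_marginal_mul_log {f : α → ℝ}
    (hsupp : ∀ S ∈ ℬ, q S ≠ 0 → ∀ i ∈ S, f i ≠ 0) :
    ∑ S ∈ ℬ, q S * log (∏ i ∈ S, f i) = ∑ i, marginal ℬ q i * log (f i) := by
  have hterm : ∀ S ∈ ℬ, q S * log (∏ i ∈ S, f i) =
      q S * ∑ i, (if i ∈ S then log (f i) else 0) := by
    intro S hS
    rcases eq_or_ne (q S) 0 with h | h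
    · simp [h]
    · rw [log_prod (hsupp S hS h), sum_ite_mem, univ_inter]
  rw [sum_congr rfl hterm, sum_mul_sum_ite_mem]
  simp

theorem sum_mul_log_bernoulliProd_marginal (hq : ∀ S ∈ ℬ, 0 ≤ q S) (hq1 : ∑ S ∈ ℬ, q S = 1) :
    ∑ S ∈ ℬ, q S * log (bernoulliProd (marginal ℬ q) S) =
      -∑ i, binEntropy (marginal ℬ q i) := by
  have hterm : ∀ S ∈ ℬ, q S * log (bernoulliProd (marginal ℬ q) S) =
      q S * ∑ i, (if i ∈ S then log (marginal ℬ q i) else log (1 - marginal ℬ q i)) := by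
    intro S hS
    rcases (hq S hS).eq_or_lt with h | h
    · simp [← h]
    · rw [log_bernoulliProd fun i => (ite_marginal_pos hq hq1 hS h i).ne']
  rw [sum_congr rfl hterm, sum_mul_sum_ite_mem, ← sum_neg_distrib]
  refine sum_congr rfl fun i _ => ?_
  rw [sum_filter_notMem_eq_one_sub_marginal hq1, binEntropy, log_inv, log_inv]
  ring

theorem sum_negMulLog_le_sum_binEntropy_marginal (hq : ∀ S ∈ ℬ, 0 ≤ q S)
    (hq1 : ∑ S ∈ ℬ, q S = 1) :
    ∑ S ∈ ℬ, negMulLog (q S) ≤ ∑ i, binEntropy (marginal ℬ q i) := by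
  have hr := bernoulliProd_nonneg (marginal_nonneg hq) (marginal_le_one hq hq1)
  have hsum : ∑ S ∈ ℬ, bernoulliProd (marginal ℬ q) S ≤ ∑ S ∈ ℬ, q S := by
    rw [hq1, ← sum_bernoulliProd (marginal ℬ q)]
    exact sum_le_univ_sum_of_nonneg hr
  have hsupp : ∀ S ∈ ℬ, q S ≠ 0 → bernoulliProd (marginal ℬ q) S ≠ 0 := fun S hS h =>
    (prod_pos fun i _ => ite_marginal_pos hq hq1 hS ((hq S hS).lt_of_ne' h) i).ne'
  have := sum_negMulLog_le_neg_sum_mul_log ℬ hq (fun S _ => hr S) hsum hsupp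
  rwa [sum_mul_log_bernoulliProd_marginal hq hq1, neg_neg] at this

end Marginal

theorem weighted_entropy_upper_bound_general
    {n : ℕ} (ℬ : Finset (Finset (Fin n)))
    (lam : Fin n → ℝ) (hlam : ∀ i, 0 ≤ lam i)
    (Z : ℝ) (hZ : Z = ∑ B ∈ ℬ, ∏ i ∈ B, lam i) (hZpos : 0 < Z)
    (p : Fin n → ℝ)
    (hp : ∀ i, p i = (∑ S ∈ ℬ.filter (fun S => i ∈ S), ∏ j ∈ S, lam j) / Z) :
    Real.log Z ≤
      ∑ i : Fin n,
        (p i * Real.log (lam i / p i) +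
          (1 - p i) * Real.log (1 / (1 - p i))) := by
  set q : Finset (Fin n) → ℝ := fun S => (∏ i ∈ S, lam i) / Z
  have hq : ∀ S ∈ ℬ, 0 ≤ q S := fun S _ => div_nonneg (prod_nonneg fun i _ => hlam i) hZpos.le
  have hq1 : ∑ S ∈ ℬ, q S = 1 := by rw [← sum_div, ← hZ, div_self hZpos.ne']
  have hpq : p = marginal ℬ q := funext fun i => by rw [hp, marginal, sum_div]
  have hsupp : ∀ S ∈ ℬ, q S ≠ 0 → ∀ i ∈ S, lam i ≠ 0 := fun S _ h i hi h0 =>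
    h (by simp [q, prod_eq_zero hi h0])
  have hentropy : ∑ S ∈ ℬ, negMulLog (q S) = log Z - ∑ i, p i * log (lam i) := by
    rw [sum_negMulLog_div_eq ℬ hZ.symm hZpos.ne', sum_mul_log_prod_eq_sum_marginal_mul_log hsupp,
      hpq]
  have hp_zero : ∀ i, lam i = 0 → p i = 0 := fun i h0 => by
    rw [hpq, marginal]
    exact sum_eq_zero fun S hS => by_contra fun h =>
      hsupp S (mem_filter.1 hS).1 h i (mem_filter.1 hS).2 h0
  have hterm : ∀ i, p i * log (lam i) + binEntropy (p i) =
      p i * log (lam i / p i) + (1 - p i) * log (1 / (1 - p i)) := fun i => by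
    rcases eq_or_ne (p i) 0 with h | h
    · simp [h]
    · rw [binEntropy, log_div (mt (hp_zero i) h) h, log_inv, one_div]
      ring
  calc log Z = ∑ S ∈ ℬ, negMulLog (q S) + ∑ i, p i * log (lam i) := by linarith
    _ ≤ ∑ i, binEntropy (p i) + ∑ i, p i * log (lam i) := by
        rw [hpq]
        gcongr
        exact sum_negMulLog_le_sum_binEntropy_marginal hq hq1
    _ = _ := by
        rw [add_comm, ← sum_add_distrib]
        exact sum_congr rfl fun i _ => hterm i

/-- **Weighted upper bound via marginal entropies.** Let `B` be a nonempty family of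
subsets of `[n]`, `λ ∈ ℝ₊ⁿ`, `Z = ∑_{B ∈ B} λ^B > 0`, and let `p i` be the marginals of
the distribution on `B` proportional to `λ^S`. Then
`∑ᵢ (pᵢ log(λᵢ/pᵢ) + (1-pᵢ) log(1/(1-pᵢ))) ≥ log Z`. -/
theorem weighted_entropy_upper_bound
    {n : ℕ} (ℬ : Finset (Finset (Fin n))) (hne : ℬ.Nonempty)
    (lam : Fin n → ℝ) (hlam : ∀ i, 0 ≤ lam i)
    (Z : ℝ) (hZ : Z = ∑ B ∈ ℬ, ∏ i ∈ B, lam i) (hZpos : 0 < Z)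
    (p : Fin n → ℝ)
    (hp : ∀ i, p i = (∑ S ∈ ℬ.filter (fun S => i ∈ S), ∏ j ∈ S, lam j) / Z) :
    Real.log Z ≤
      ∑ i : Fin n,
        (p i * Real.log (lam i / p i) +
          (1 - p i) * Real.log (1 / (1 - p i))) :=
  weighted_entropy_upper_bound_general ℬ lam hlam Z hZ hZpos p hp
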